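/- arXiv:0908.0309 — 2 statements merged into one kernel-verified Lean document; each statement's English description precedes it below -/
import Mathlib

section
/- Let $g \ge 2$ and define $h_g$ by $h_g(1) = 0$, $h_g(n) = h_g(n-1) + (n^3-n^2) + \frac{n^2}{4}(g-1) + \frac{n}{2} + \frac{n^2 g^2}{4} + \frac{1}{4}$. Then for all positive integers $s, t$ with $s + t = n$: $h_g(s) + h_g(t) + stg - 1 \le h_g(n)$. -/
/-- The increment `Λ(n) = (n³ - n²) + n²(g-1)/4 + n/2 + n²g²/4 + 1/4`. -/
def Lam (g n : ℚ) : ℚ :=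
  (n ^ 3 - n ^ 2) + n ^ 2 / 4 * (g - 1) + n / 2 + n ^ 2 * g ^ 2 / 4 + 1 / 4

/-- The function `h_g : ℕ → ℚ` defined recursively by `h_g(1) = 0` and
`h_g(n) = h_g(n-1) + Λ(n)` for `n ≥ 2`. -/
def hg (g : ℚ) : ℕ → ℚ
  | 0 => 0
  | 1 => 0
  | (n + 2) => hg g (n + 1) + Lam g ((n : ℚ) + 2)

/-!
Write `D(s, t) = h_g(s + t) - h_g(s) - h_g(t) - s t g + 1` and induct on `t`. Raising `t` by one
changes `D` by `Λ(s + t + 1) - Λ(t + 1) - s g`, and `D(s, 1) = Λ(s + 1) - s g + 1`. Both are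
nonnegative because for `m ≥ 1` the increment `Λ(m + s) - Λ(m)` is at least
`s / 2 + s g² / 2 ≥ s g`, and `Λ(1) ≥ 0`.
-/

lemma hg_one (g : ℚ) : hg g 1 = 0 := rfl

lemma hg_succ (g : ℚ) {n : ℕ} (hn : 1 ≤ n) : hg g (n + 1) = hg g n + Lam g (n + 1) := by
  obtain ⟨k, rfl⟩ := Nat.exists_eq_add_of_le' hn
  rw [hg]
  push_cast
  ring_nf

lemma Lam_one_nonneg {g : ℚ} (hg1 : 1 ≤ g) : 0 ≤ Lam g 1 := by
  unfold Lam
  nlinarith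

lemma Lam_add_mul_le_Lam_add {g m s : ℚ} (hg1 : 1 ≤ g) (hm : 1 ≤ m) (hs : 0 ≤ s) :
    Lam g m + s * g ≤ Lam g (m + s) := by
  unfold Lam
  nlinarith [mul_nonneg hs (sq_nonneg (g - 1)), mul_nonneg (mul_nonneg hs hs) (sub_nonneg.2 hm),
    mul_nonneg (mul_nonneg hs (sub_nonneg.2 hm)) (sub_nonneg.2 hg1), mul_nonneg hs hs,
    mul_nonneg (mul_nonneg hs (sub_nonneg.2 hm)) (sub_nonneg.2 hm)]

theorem hg_add_add_mul_sub_one_le_hg_add {g : ℚ} (hg1 : 1 ≤ g) {s t : ℕ} (hs : 1 ≤ s)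
    (ht : 1 ≤ t) : hg g s + hg g t + s * t * g - 1 ≤ hg g (s + t) := by
  induction t, ht using Nat.le_induction with
  | base =>
    have hslope : Lam g 1 + s * g ≤ Lam g (s + 1) :=
      (Lam_add_mul_le_Lam_add hg1 le_rfl (Nat.cast_nonneg s)).trans_eq
        (congrArg (Lam g) (add_comm _ _))
    rw [hg_succ g hs, hg_one]
    push_cast
    linarith [Lam_one_nonneg hg1]
  | succ t ht ih =>
    have hslope : Lam g (t + 1) + s * g ≤ Lam g (s + t + 1) :=
      (Lam_add_mul_le_Lam_add hg1 (by simp) (Nat.cast_nonneg s)).trans_eq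
        (congrArg (Lam g) (by ring))
    rw [← add_assoc, hg_succ g ht, hg_succ g (by omega : 1 ≤ s + t)]
    push_cast at hslope ⊢
    linear_combination ih + hslope

/-- Let `g ≥ 2` be an integer.  For all positive integers `s, t` with `s + t = n`,
`h_g(s) + h_g(t) + s t g - 1 ≤ h_g(n)`. -/
theorem stmt_14 (g : ℤ) (hgen : 2 ≤ g) (s t n : ℕ) (hs : 1 ≤ s) (ht : 1 ≤ t)
    (hst : s + t = n) :
    hg (g : ℚ) s + hg (g : ℚ) t + (s : ℚ) * t * g - 1 ≤ hg (g : ℚ) n := by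
  subst hst
  exact hg_add_add_mul_sub_one_le_hg_add (by exact_mod_cast hgen.trans' one_le_two) hs ht
end

section
/- Every subgroup of the symmetric group $S_n$ (for $n \ge 2$) can be generated by at most $n - 1$ elements. -/
/-!
Induction on the number of points, carrying the number of orbits along: a permutation group on
`n` points with `k` orbits is generated by `n - k` elements. If `H` is intransitive, split the
points into an orbit and its complement: `H` is generated by lifts of generators of the group it
induces on the orbit together with generators of the kernel of that action, and the kernel acts
faithfully on the complement, so induction applies to both pieces. If `H` is transitive and
nontrivial, a maximal subgroup `M` of `H` containing a point stabilizer is intransitive (Frattini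
argument), so `M` needs at most `n - 2` generators and `H` is generated by `M` and one more element.
-/

open MulAction

namespace Subgroup

variable {G : Type*} [Group G]

lemma exists_finset_card_eq_rank_closure_eq (K : Subgroup G) [Group.FG K] :
    ∃ S : Finset G, S.card = Group.rank K ∧ closure (S : Set G) = K := by
  obtain ⟨S, hcard, hS⟩ := Group.rank_spec K
  refine ⟨S.map (Function.Embedding.subtype _), by rw [Finset.card_map, hcard], ?_⟩
  rw [Finset.coe_map, Function.Embedding.coe_subtype, ← K.coe_subtype, ← MonoidHom.map_closure,
    hS, ← MonoidHom.range_eq_map, range_subtype]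

lemma rank_le_card_of_closure_eq {K : Subgroup G} [Group.FG K] {S : Finset G}
    (hS : closure (S : Set G) = K) : Group.rank K ≤ S.card := by
  subst hS
  exact rank_closure_finset_le_card S

lemma rank_le_rank_add_one_of_covBy {M K : Subgroup G} [Group.FG M] [Group.FG K] (h : M ⋖ K) :
    Group.rank K ≤ Group.rank M + 1 := by
  classical
  obtain ⟨S, hcard, hS⟩ := M.exists_finset_card_eq_rank_closure_eq
  obtain ⟨g, hgK, hgM⟩ := SetLike.exists_of_lt h.lt
  have hM : M < closure (insert g S : Set G) := by
    refine lt_of_le_of_ne (hS ▸ closure_mono (Set.subset_insert _ _)) fun hMg => hgM ?_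
    exact hMg ▸ subset_closure (Set.mem_insert g _)
  have hK : closure (insert g S : Set G) ≤ K := by
    rw [closure_le, Set.insert_subset_iff]
    exact ⟨hgK, (hS ▸ subset_closure : (S : Set G) ⊆ M).trans h.le⟩
  calc Group.rank K ≤ (insert g S).card := rank_le_card_of_closure_eq <| by
        rw [Finset.coe_insert]; exact (h.eq_or_eq hM.le hK).resolve_left hM.ne'
    _ ≤ Group.rank M + 1 := hcard ▸ Finset.card_insert_le g S

end Subgroup

namespace Group

variable {G Q : Type*} [Group G] [Group Q]

lemma rank_le_rank_range_add_rank_ker [FG G] (f : G →* Q) [FG f.ker] :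
    rank G ≤ rank f.range + rank f.ker := by
  classical
  obtain ⟨S, hScard, hS⟩ := rank_spec f.range
  obtain ⟨T, hTcard, hT⟩ := f.ker.exists_finset_card_eq_rank_closure_eq
  let lift : f.range → G := Function.surjInv f.rangeRestrict_surjective
  have hlift : Subgroup.closure (lift '' S) ⊔ f.ker = ⊤ := by
    rw [← f.ker_rangeRestrict, ← Subgroup.comap_map_eq, MonoidHom.map_closure,
      ← Set.image_comp, (Function.rightInverse_surjInv _).comp_eq_id, Set.image_id, hS,
      Subgroup.comap_top]
  refine le_trans (b := (S.image lift ∪ T).card) (rank_le ?_) ?_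
  · rw [Finset.coe_union, Subgroup.closure_union, Finset.coe_image, hT, hlift]
  · rw [← hScard, ← hTcard]
    exact (Finset.card_union_le _ _).trans (Nat.add_le_add_right Finset.card_image_le _)

end Group

namespace MulAction

variable {G G' X : Type*} [Group G] [Group G'] [MulAction G X] [MulAction G' X]

lemma card_orbitRel_quotient_le_of_le [Finite X] (h : orbitRel G' X ≤ orbitRel G X) :
    Nat.card (orbitRel.Quotient G X) ≤ Nat.card (orbitRel.Quotient G' X) := by
  refine Nat.card_le_card_of_surjective (Quotient.map' id h) fun q => ?_
  induction q using Quotient.inductionOn' with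
  | h x => exact ⟨Quotient.mk'' x, rfl⟩

lemma card_orbitRel_quotient_le_add_compl [Finite X] (p : SubMulAction G X) :
    Nat.card (orbitRel.Quotient G X) ≤
      Nat.card (orbitRel.Quotient G p) + Nat.card (orbitRel.Quotient G ↥pᶜ) := by
  let F : orbitRel.Quotient G p ⊕ orbitRel.Quotient G ↥pᶜ → orbitRel.Quotient G X :=
    Sum.elim (Quotient.map' Subtype.val fun _ _ => SubMulAction.mem_orbit_subMul_iff.mp)
      (Quotient.map' Subtype.val fun _ _ => SubMulAction.mem_orbit_subMul_iff.mp)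
  rw [← Nat.card_sum]
  refine Nat.card_le_card_of_surjective F fun q => ?_
  induction q using Quotient.inductionOn' with
  | h x =>
    by_cases hx : x ∈ p
    · exact ⟨.inl (Quotient.mk'' ⟨x, hx⟩), rfl⟩
    · exact ⟨.inr (Quotient.mk'' ⟨x, hx⟩), rfl⟩

end MulAction

namespace SubMulAction

open Equiv

variable {G X : Type*} [Group G] [MulAction G X] (p : SubMulAction G X)

abbrev inducedGroup : Subgroup (Perm p) := (toPermHom G p).range

abbrev inducedGroupCompl : Subgroup (Perm ↥pᶜ) :=
  ((toPermHom G ↥pᶜ).comp (toPermHom G p).ker.subtype).range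

lemma card_orbitRel_quotient_le_inducedGroup_add_inducedGroupCompl [Finite X] :
    Nat.card (orbitRel.Quotient G X) ≤
      Nat.card (orbitRel.Quotient p.inducedGroup p) +
        Nat.card (orbitRel.Quotient p.inducedGroupCompl ↥pᶜ) := by
  refine (card_orbitRel_quotient_le_add_compl p).trans (add_le_add ?_ ?_) <;>
    refine card_orbitRel_quotient_le_of_le fun x y hxy => ?_
  · obtain ⟨⟨_, g, rfl⟩, hg⟩ := hxy
    exact ⟨g, hg⟩
  · obtain ⟨⟨_, g, rfl⟩, hg⟩ := hxy
    exact ⟨g, hg⟩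

lemma rank_le_rank_inducedGroup_add_rank_inducedGroupCompl [Finite G] [FaithfulSMul G X] :
    Group.rank G ≤ Group.rank p.inducedGroup + Group.rank p.inducedGroupCompl := by
  have hinj : Function.Injective ((toPermHom G ↥pᶜ).comp (toPermHom G p).ker.subtype) := by
    refine (injective_iff_map_eq_one _).mpr fun ⟨g, hg⟩ hg' => Subtype.ext ?_
    refine eq_of_smul_eq_smul (α := X) fun x => ?_
    by_cases hx : x ∈ p
    · simpa using congrArg Subtype.val (Perm.ext_iff.mp hg ⟨x, hx⟩)
    · simpa using congrArg Subtype.val (Perm.ext_iff.mp hg' ⟨x, hx⟩)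
  rw [← Group.rank_congr (MonoidHom.ofInjective hinj)]
  exact Group.rank_le_rank_range_add_rank_ker _

end SubMulAction

namespace Subgroup

variable {G X : Type*} [Group G] [MulAction G X]

lemma le_of_inf_stabilizer_le {H M : Subgroup G} [IsPretransitive M X] {a : X}
    (hMH : M ≤ H) (hM : H ⊓ stabilizer G a ≤ M) : H ≤ M := by
  intro g hg
  obtain ⟨m, hm⟩ := MulAction.exists_smul_eq M a (g • a)
  have hstab : (m : G)⁻¹ * g ∈ H ⊓ stabilizer G a :=
    mem_inf.mpr ⟨H.mul_mem (H.inv_mem (hMH m.2)) hg, by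
      rw [mem_stabilizer_iff, mul_smul, ← hm, Subgroup.smul_def, inv_smul_smul]⟩
  simpa using M.mul_mem m.2 (hM hstab)

lemma exists_covBy_not_isPretransitive [Finite G] {H : Subgroup G} [IsPretransitive H X] {a : X}
    (ha : ¬ H ≤ stabilizer G a) : ∃ M, M ⋖ H ∧ ¬ IsPretransitive M X := by
  obtain ⟨M, hle, hcov⟩ := exists_le_covBy_of_lt (inf_lt_left.mpr ha)
  exact ⟨M, hcov, fun _ => hcov.lt.not_ge (le_of_inf_stabilizer_le hcov.le hle)⟩

end Subgroup

namespace Equiv.Perm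

universe u

variable {α : Type u} [Finite α]

lemma rank_add_card_orbitRel_quotient_le_of_not_isPretransitive
    (ih : ∀ (β : Type u) [Finite β], Nat.card β < Nat.card α → ∀ K : Subgroup (Perm β),
      Group.rank K + Nat.card (orbitRel.Quotient K β) ≤ Nat.card β)
    (H : Subgroup (Perm α)) (hH : ¬ IsPretransitive H α) :
    Group.rank H + Nat.card (orbitRel.Quotient H α) ≤ Nat.card α := by
  obtain ⟨a, b, hab⟩ : ∃ a b : α, b ∉ orbit H a := by
    by_contra! h
    exact hH ⟨fun a b => h a b⟩
  let p : SubMulAction H α := ⟨orbit H a, fun g _ hx => mem_orbit_of_mem_orbit g hx⟩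
  have hcard : Nat.card p + Nat.card ↥pᶜ = Nat.card α := by
    change Nat.card (orbit H a) + Nat.card ↥(orbit H a)ᶜ = _
    rw [Nat.card_coe_set_eq, Nat.card_coe_set_eq]
    exact Set.ncard_add_ncard_compl _
  have : Nonempty p := ⟨⟨a, mem_orbit_self a⟩⟩
  have : Nonempty ↥pᶜ := ⟨⟨b, hab⟩⟩
  have : 0 < Nat.card p := Nat.card_pos
  have : 0 < Nat.card ↥pᶜ := Nat.card_pos
  have hrank := p.rank_le_rank_inducedGroup_add_rank_inducedGroupCompl
  have horb := p.card_orbitRel_quotient_le_inducedGroup_add_inducedGroupCompl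
  calc Group.rank H + Nat.card (orbitRel.Quotient H α)
      ≤ (Group.rank p.inducedGroup + Nat.card (orbitRel.Quotient p.inducedGroup p)) +
        (Group.rank p.inducedGroupCompl +
          Nat.card (orbitRel.Quotient p.inducedGroupCompl ↥pᶜ)) := by
        omega
    _ ≤ Nat.card p + Nat.card ↥pᶜ := add_le_add (ih _ (by omega) _) (ih _ (by omega) _)
    _ = Nat.card α := hcard

theorem rank_add_card_orbitRel_quotient_le (H : Subgroup (Perm α)) :
    Group.rank H + Nat.card (orbitRel.Quotient H α) ≤ Nat.card α := by
  induction h : Nat.card α using Nat.strong_induction_on generalizing α with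
  | _ n ih =>
  subst h
  have ih' := fun (β : Type u) [Finite β] (hβ : Nat.card β < Nat.card α) K => ih _ hβ K rfl
  by_cases hH : IsPretransitive H α
  swap
  · exact rank_add_card_orbitRel_quotient_le_of_not_isPretransitive ih' H hH
  by_cases hfix : ∀ a : α, H ≤ stabilizer (Perm α) a
  · obtain rfl : H = ⊥ :=
      eq_bot_iff.mpr fun h hh => Subgroup.mem_bot.mpr <| Perm.ext fun a => hfix a hh
    rw [Group.rank_eq_zero, zero_add]
    exact Nat.card_le_card_of_surjective _ Quotient.mk''_surjective
  obtain ⟨a, ha⟩ := not_forall.mp hfix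
  obtain ⟨M, hcov, hM⟩ := Subgroup.exists_covBy_not_isPretransitive ha
  have hrank := Subgroup.rank_le_rank_add_one_of_covBy hcov
  have hbound := rank_add_card_orbitRel_quotient_le_of_not_isPretransitive ih' M hM
  have hH1 : Nat.card (orbitRel.Quotient H α) ≤ 1 :=
    Finite.card_le_one_iff_subsingleton.mpr ((pretransitive_iff_subsingleton_quotient H α).mp hH)
  have hM2 : 1 < Nat.card (orbitRel.Quotient M α) := by
    rw [Finite.one_lt_card_iff_nontrivial, ← not_subsingleton_iff_nontrivial,
      ← pretransitive_iff_subsingleton_quotient]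
    exact hM
  omega

lemma rank_le_card_sub_one (H : Subgroup (Perm α)) : Group.rank H ≤ Nat.card α - 1 := by
  have hbound := rank_add_card_orbitRel_quotient_le H
  have : Nat.card α = 0 ∨ 0 < Nat.card (orbitRel.Quotient H α) := by
    rcases isEmpty_or_nonempty α with hα | hα
    · exact .inl Nat.card_of_isEmpty
    · have : Nonempty (orbitRel.Quotient H α) := hα.map Quotient.mk''
      exact .inr Nat.card_pos
  omega

end Equiv.Perm

theorem stmt_18_general (n : ℕ) (H : Subgroup (Equiv.Perm (Fin n))) :
    ∃ S : Finset (Equiv.Perm (Fin n)), (S : Set (Equiv.Perm (Fin n))) ⊆ H ∧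
      Subgroup.closure (S : Set (Equiv.Perm (Fin n))) = H ∧ S.card ≤ n - 1 := by
  obtain ⟨S, hcard, hS⟩ := H.exists_finset_card_eq_rank_closure_eq
  refine ⟨S, fun x hx => hS ▸ Subgroup.subset_closure hx, hS, ?_⟩
  simpa [hcard] using Equiv.Perm.rank_le_card_sub_one H

/-- Every subgroup of the symmetric group `Sₙ` (`n ≥ 2`) can be generated by at most
`n - 1` elements. -/
theorem stmt_18 (n : ℕ) (hn : 2 ≤ n) (H : Subgroup (Equiv.Perm (Fin n))) :
    ∃ S : Finset (Equiv.Perm (Fin n)), (S : Set (Equiv.Perm (Fin n))) ⊆ H ∧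
      Subgroup.closure (S : Set (Equiv.Perm (Fin n))) = H ∧ S.card ≤ n - 1 :=
  stmt_18_general n H
end
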